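/- arXiv:1905.09156 — 2 statements merged into one kernel-verified Lean document; each statement's English description precedes it below -/
import Mathlib

section
/- Let a_1, a_2, a_3, a_4 > 0 satisfy ((a_3 a_4 / a_2) − (a_1 a_4² / a_2²))·λ > 1 for every eigenvalue λ of Q_S for every nonempty S ⊆ V, and set b_1 = a_3 a_4 / a_2 and b_2 = a_1 a_4² / a_2² (so b_1 > b_2 > 0). Define the set function f_4 on subsets of V by f_4(∅) = 0 and, for nonempty S, f_4(S) = C_4 − tr( Q_S⁻² (b_1 Q_S − I) ((b_1 − b_2) Q_S − I)⁻¹ ), where C_4 = 2·max over single nodes s ∈ V of tr( Q_{{s}}⁻² (b_1 Q_{{s}} − I) ((b_1 − b_2) Q_{{s}} − I)⁻¹ ). Then f_4 is non-decreasing and submodular. -/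
/-!
Put `W_S = ((b₁ - b₂) Q_S - I)⁻¹`; then `Q_S⁻²(b₁Q_S - I) W_S = Q_S⁻² + b₂ Q_S⁻¹ W_S`.
Both `Q_S` and `(b₁ - b₂) Q_S - I` are positive definite with nonpositive off-diagonal entries,
so their inverses are entrywise nonnegative. Enlarging `S` by `T` adds a nonnegative diagonal
matrix `D` which shrinks as `S` grows, and the resolvent identity
`Q_S⁻¹ - Q_{S ∪ T}⁻¹ = Q_S⁻¹ D Q_{S ∪ T}⁻¹` shows that every entry of `Q_S⁻¹` and `W_S` has
nonnegative decrements `g S - g (S ∪ T)` that are antitone in `S`. By a Leibniz rule for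
decrements this passes to sums and products of nonnegative functions, hence to the traces making
up `H₄`, which is therefore antitone and supermodular on nonempty sets. Finally `f₄ = C₄ - H₄`;
the constant `C₄ = 2 max_s H₄({s})` makes `f₄(∅) = 0` compatible with both properties.
-/

open Matrix

section Decrements

variable {α : Type*} [SemilatticeSup α] {U : Set α} {f g : α → ℝ}

def HasAntitoneDecrementsOn (g : α → ℝ) (U : Set α) : Prop :=
  ∀ t, AntitoneOn (fun x => g x - g (x ⊔ t)) U

namespace HasAntitoneDecrementsOn

theorem antitoneOn (hg : HasAntitoneDecrementsOn g U) : AntitoneOn g U := fun x hx y hy hxy => by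
  simpa only [sup_of_le_right hxy, sup_idem, sub_self, sub_nonneg] using hg y hx hy hxy

theorem sub_sup_nonneg (hg : HasAntitoneDecrementsOn g U) (hU : IsUpperSet U) {x : α} (hx : x ∈ U)
    (t : α) : 0 ≤ g x - g (x ⊔ t) :=
  sub_nonneg.2 (hg.antitoneOn hx (hU le_sup_left hx) le_sup_left)

theorem congr (hU : IsUpperSet U) (hf : HasAntitoneDecrementsOn f U) (h : ∀ x ∈ U, f x = g x) :
    HasAntitoneDecrementsOn g U := by
  intro t x hx y hy hxy
  simpa only [h x hx, h y hy, h _ (hU le_sup_left hx), h _ (hU le_sup_left hy)] using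
    hf t hx hy hxy

theorem add (hf : HasAntitoneDecrementsOn f U) (hg : HasAntitoneDecrementsOn g U) :
    HasAntitoneDecrementsOn (fun x => f x + g x) U := fun t x hx y hy hxy => by
  simpa only [add_sub_add_comm] using add_le_add (hf t hx hy hxy) (hg t hx hy hxy)

theorem const_mul (hg : HasAntitoneDecrementsOn g U) {c : ℝ} (hc : 0 ≤ c) :
    HasAntitoneDecrementsOn (fun x => c * g x) U := fun t x hx y hy hxy => by
  simpa only [← mul_sub] using mul_le_mul_of_nonneg_left (hg t hx hy hxy) hc

theorem sum {ι : Type*} (s : Finset ι) {g : ι → α → ℝ}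
    (hg : ∀ i ∈ s, HasAntitoneDecrementsOn (g i) U) :
    HasAntitoneDecrementsOn (fun x => ∑ i ∈ s, g i x) U := fun t x hx y hy hxy => by
  simpa only [← Finset.sum_sub_distrib] using Finset.sum_le_sum fun i hi => hg i hi t hx hy hxy

theorem mul (hU : IsUpperSet U) (hf : HasAntitoneDecrementsOn f U)
    (hg : HasAntitoneDecrementsOn g U) (hf0 : ∀ x ∈ U, 0 ≤ f x) (hg0 : ∀ x ∈ U, 0 ≤ g x) :
    HasAntitoneDecrementsOn (fun x => f x * g x) U := by
  intro t x hx y hy hxy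
  have hxt : x ⊔ t ∈ U := hU le_sup_left hx
  have hyt : y ⊔ t ∈ U := hU le_sup_left hy
  have leibniz : ∀ z, f z * g z - f (z ⊔ t) * g (z ⊔ t)
      = (f z - f (z ⊔ t)) * g z + f (z ⊔ t) * (g z - g (z ⊔ t)) := fun z => by ring
  simp only [leibniz]
  exact add_le_add
    (mul_le_mul (hf t hx hy hxy) (hg.antitoneOn hx hy hxy) (hg0 y hy) (hf.sub_sup_nonneg hU hx t))
    (mul_le_mul (hf.antitoneOn hxt hyt (sup_le_sup_right hxy t)) (hg t hx hy hxy)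
      (hg.sub_sup_nonneg hU hy t) (hf0 _ hxt))

end HasAntitoneDecrementsOn

end Decrements

theorem HasAntitoneDecrementsOn.add_le_sup_add_inf {α : Type*} [Lattice α] {U : Set α}
    {g : α → ℝ} (hg : HasAntitoneDecrementsOn g U) (hU : IsUpperSet U) {a b : α}
    (hab : a ⊓ b ∈ U) : g a + g b ≤ g (a ⊔ b) + g (a ⊓ b) := by
  -- the decrements in direction `a` at `a ⊓ b ≤ b`
  have := hg a hab (hU inf_le_right hab) inf_le_right
  simp only [sup_eq_right.2 (inf_le_left : a ⊓ b ≤ a), sup_comm b a] at this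
  linarith

section MatrixFamilies

variable {α : Type*} [SemilatticeSup α] {U : Set α} {l m n : Type*} [Fintype m]

theorem Matrix.mul_apply_nonneg {A : Matrix l m ℝ} {B : Matrix m n ℝ} (hA : ∀ i j, 0 ≤ A i j)
    (hB : ∀ i j, 0 ≤ B i j) (i : l) (j : n) : 0 ≤ (A * B) i j :=
  Finset.sum_nonneg fun k _ => mul_nonneg (hA i k) (hB k j)

theorem antitoneOn_mul_apply {A : α → Matrix l m ℝ} {B : α → Matrix m n ℝ}
    (hA : ∀ i j, AntitoneOn (A · i j) U) (hB : ∀ i j, AntitoneOn (B · i j) U)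
    (hA0 : ∀ x ∈ U, ∀ i j, 0 ≤ A x i j) (hB0 : ∀ x ∈ U, ∀ i j, 0 ≤ B x i j) (i : l) (j : n) :
    AntitoneOn (fun x => (A x * B x) i j) U := fun _ hx _ hy hxy =>
  Finset.sum_le_sum fun k _ =>
    mul_le_mul (hA i k hx hy hxy) (hB k j hx hy hxy) (hB0 _ hy k j) (hA0 _ hx i k)

theorem hasAntitoneDecrementsOn_trace_mul (hU : IsUpperSet U) {A B : α → Matrix m m ℝ}
    (hA : ∀ i j, HasAntitoneDecrementsOn (A · i j) U)
    (hB : ∀ i j, HasAntitoneDecrementsOn (B · i j) U)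
    (hA0 : ∀ x ∈ U, ∀ i j, 0 ≤ A x i j) (hB0 : ∀ x ∈ U, ∀ i j, 0 ≤ B x i j) :
    HasAntitoneDecrementsOn (fun x => trace (A x * B x)) U :=
  .sum _ fun i _ => .sum _ fun k _ =>
    (hA i k).mul hU (hB k i) (fun x hx => hA0 x hx i k) (fun x hx => hB0 x hx k i)

end MatrixFamilies

theorem Matrix.smul_sub_one_apply_nonpos {m : Type*} [DecidableEq m] {Q : Matrix m m ℝ} {c : ℝ}
    (hc : 0 ≤ c) (hoff : ∀ i j, i ≠ j → Q i j ≤ 0) {i j : m} (hij : i ≠ j) :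
    (c • Q - 1) i j ≤ 0 := by
  simpa [one_apply_ne hij] using mul_nonpos_of_nonneg_of_nonpos hc (hoff i j hij)

section Inverse

variable {α : Type*} [SemilatticeSup α] {U : Set α} {m : Type*} [Fintype m] [DecidableEq m]

theorem Matrix.IsHermitian.eigenvalues_mem_roots_charpoly {A : Matrix m m ℝ} (hA : A.IsHermitian)
    (i : m) : hA.eigenvalues i ∈ A.charpoly.roots := by
  rw [hA.roots_charpoly_eq_eigenvalues]
  exact Multiset.mem_map_of_mem _ (Finset.mem_univ_val i)

theorem Matrix.IsHermitian.posDef_smul_sub_one {A : Matrix m m ℝ} (hA : A.IsHermitian) {c : ℝ}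
    (h : ∀ t ∈ A.charpoly.roots, 1 < c * t) : (c • A - 1).PosDef := by
  have key : c • A - 1 = Unitary.conjStarAlgAut ℝ _ hA.eigenvectorUnitary
      (diagonal fun i => c * hA.eigenvalues i - 1) := by
    conv_lhs => rw [hA.spectral_theorem]
    rw [← map_one (Unitary.conjStarAlgAut ℝ _ hA.eigenvectorUnitary), ← map_smul, ← map_sub]
    congr 1
    ext i j
    by_cases hij : i = j <;> simp [hij]
  rw [key]
  simpa [Unitary.isUnit_coe.posDef_star_right_conjugate_iff] using
    fun i => h _ (hA.eigenvalues_mem_roots_charpoly i)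

/-- Test `M x = e_j`, for the column `x` of `M⁻¹`, against the negative part `x⁻`: the sign
pattern of `M` gives `x⁻ ⬝ (M x⁻) ≤ x⁻ ⬝ (M x⁺) - x⁻ j ≤ 0`, so `x⁻ = 0`. -/
theorem Matrix.PosDef.inv_apply_nonneg {M : Matrix m m ℝ} (hM : M.PosDef)
    (hoff : ∀ i j, i ≠ j → M i j ≤ 0) (i j : m) : 0 ≤ M⁻¹ i j := by
  set x := M⁻¹ *ᵥ Pi.single j 1
  have hMx : M *ᵥ x = Pi.single j 1 := by
    rw [mulVec_mulVec, mul_nonsing_inv _ ((isUnit_iff_isUnit_det M).mp hM.isUnit), one_mulVec]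
  have hneg : x⁻ = x⁺ - x := eq_sub_of_add_eq (sub_eq_iff_eq_add'.mp (posPart_sub_negPart x)).symm
  have hcross : x⁻ ⬝ᵥ (M *ᵥ x⁺) ≤ 0 := by
    refine Finset.sum_nonpos fun k _ => ?_
    rw [mulVec, dotProduct, Finset.mul_sum]
    refine Finset.sum_nonpos fun l _ => ?_
    obtain rfl | hkl := eq_or_ne k l
    · rcases le_total 0 (x k) with h | h <;> simp [h]
    · exact mul_nonpos_of_nonneg_of_nonpos (negPart_nonneg _)
        (mul_nonpos_of_nonpos_of_nonneg (hoff k l hkl) (posPart_nonneg _))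
  have hquad : x⁻ ⬝ᵥ (M *ᵥ x⁻) = x⁻ ⬝ᵥ (M *ᵥ x⁺) - x⁻ j := by
    rw [← dotProduct_single_one x⁻ j, ← hMx, ← dotProduct_sub, ← mulVec_sub, hneg]
  have hzero : x⁻ = 0 := by
    by_contra hne
    have hpos := hM.dotProduct_mulVec_pos hne
    rw [star_trivial] at hpos
    linarith [show 0 ≤ x⁻ j from negPart_nonneg (x j)]
  have hx : x i = M⁻¹ i j := by simp [x]
  rw [← hx, ← posPart_sub_negPart x, hzero, sub_zero]
  exact posPart_nonneg _

theorem hasAntitoneDecrementsOn_inv_apply (hU : IsUpperSet U) {M : α → Matrix m m ℝ}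
    (hpos : ∀ x ∈ U, (M x).PosDef) (hoff : ∀ x ∈ U, ∀ i j, i ≠ j → M x i j ≤ 0)
    (hM : ∀ i j, HasAntitoneDecrementsOn (fun x => -M x i j) U) (i j : m) :
    HasAntitoneDecrementsOn (fun x => (M x)⁻¹ i j) U := by
  have hP0 : ∀ x ∈ U, ∀ i j, 0 ≤ (M x)⁻¹ i j := fun x hx =>
    (hpos x hx).inv_apply_nonneg (hoff x hx)
  have hsub : ∀ x ∈ U, ∀ y ∈ U, (M x)⁻¹ - (M y)⁻¹ = (M x)⁻¹ * (M y - M x) * (M y)⁻¹ :=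
    fun x hx y hy => inv_sub_inv (iff_of_true (hpos x hx).isUnit (hpos y hy).isUnit)
  have hmono : ∀ i j, MonotoneOn (M · i j) U := fun i j _ hx _ hy hxy =>
    neg_le_neg_iff.mp ((hM i j).antitoneOn hx hy hxy)
  have hP : ∀ i j, AntitoneOn (fun x => (M x)⁻¹ i j) U := by
    intro i j x hx y hy hxy
    have hinc : ∀ k l, 0 ≤ (M y - M x) k l := fun k l => sub_nonneg.2 (hmono k l hx hy hxy)
    have := mul_apply_nonneg (mul_apply_nonneg (hP0 x hx) hinc) (hP0 y hy) i j
    rwa [← hsub x hx y hy, Matrix.sub_apply, sub_nonneg] at this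
  intro t
  have hD : ∀ k l, AntitoneOn (fun x => (M (x ⊔ t) - M x) k l) U := fun k l x hx y hy hxy => by
    simpa only [Matrix.sub_apply, neg_sub_neg] using hM k l t hx hy hxy
  have hD0 : ∀ x ∈ U, ∀ k l, 0 ≤ (M (x ⊔ t) - M x) k l := fun x hx k l =>
    sub_nonneg.2 (hmono k l hx (hU le_sup_left hx) le_sup_left)
  have hPt : ∀ k l, AntitoneOn (fun x => (M (x ⊔ t))⁻¹ k l) U := fun k l x hx y hy hxy =>
    hP k l (hU le_sup_left hx) (hU le_sup_left hy) (sup_le_sup_right hxy t)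
  have hanti := antitoneOn_mul_apply (antitoneOn_mul_apply hP hD hP0 hD0) hPt
    (fun x hx => mul_apply_nonneg (hP0 x hx) (hD0 x hx))
    (fun x hx => hP0 _ (hU le_sup_left hx)) i j
  intro x hx y hy hxy
  simpa only [← hsub _ hx _ (hU le_sup_left hx), ← hsub _ hy _ (hU le_sup_left hy),
    Matrix.sub_apply] using hanti hx hy hxy

end Inverse

section Coherence

variable {m : Type*} [Fintype m] [DecidableEq m]

/-- `coherence4 b₁ b₂ Q_S` is the fourth-order coherence `H₄(S)` divided by `ρ₄`. -/
noncomputable def coherence4 (b₁ b₂ : ℝ) (Q : Matrix m m ℝ) : ℝ :=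
  trace (Q⁻¹ * Q⁻¹ * (b₁ • Q - 1) * ((b₁ - b₂) • Q - 1)⁻¹)

theorem coherence4_eq {b₁ b₂ : ℝ} {Q : Matrix m m ℝ} (hQ : IsUnit Q)
    (hW : IsUnit ((b₁ - b₂) • Q - 1)) :
    coherence4 b₁ b₂ Q = trace (Q⁻¹ * Q⁻¹) + b₂ * trace (Q⁻¹ * ((b₁ - b₂) • Q - 1)⁻¹) := by
  have hsplit : b₁ • Q - 1 = ((b₁ - b₂) • Q - 1) + b₂ • Q := by rw [sub_smul]; abel
  rw [coherence4, hsplit, mul_add, add_mul,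
    mul_nonsing_inv_cancel_right _ _ ((isUnit_iff_isUnit_det _).mp hW), Matrix.mul_smul,
    Matrix.smul_mul, nonsing_inv_mul_cancel_right _ _ ((isUnit_iff_isUnit_det _).mp hQ),
    trace_add, trace_smul, smul_eq_mul]

variable {α : Type*} [SemilatticeSup α] {U : Set α} {b₁ b₂ : ℝ}

theorem coherence4_nonneg {Q : Matrix m m ℝ} (hb₂ : 0 ≤ b₂) (hc : 0 ≤ b₁ - b₂) (hQ : Q.PosDef)
    (hoff : ∀ i j, i ≠ j → Q i j ≤ 0) (hW : ((b₁ - b₂) • Q - 1).PosDef) :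
    0 ≤ coherence4 b₁ b₂ Q := by
  have hP := hQ.inv_apply_nonneg hoff
  have hR := hW.inv_apply_nonneg fun i j => smul_sub_one_apply_nonpos hc hoff
  rw [coherence4_eq hQ.isUnit hW.isUnit]
  exact add_nonneg (Finset.sum_nonneg fun i _ => mul_apply_nonneg hP hP i i)
    (mul_nonneg hb₂ (Finset.sum_nonneg fun i _ => mul_apply_nonneg hP hR i i))

theorem hasAntitoneDecrementsOn_coherence4 (hU : IsUpperSet U) {Q : α → Matrix m m ℝ}
    (hb₂ : 0 ≤ b₂) (hc : 0 ≤ b₁ - b₂) (hpos : ∀ x ∈ U, (Q x).PosDef)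
    (hoff : ∀ x ∈ U, ∀ i j, i ≠ j → Q x i j ≤ 0)
    (hQ : ∀ i j, HasAntitoneDecrementsOn (fun x => -Q x i j) U)
    (hW : ∀ x ∈ U, ((b₁ - b₂) • Q x - 1).PosDef) :
    HasAntitoneDecrementsOn (fun x => coherence4 b₁ b₂ (Q x)) U := by
  have hWoff : ∀ x ∈ U, ∀ i j, i ≠ j → ((b₁ - b₂) • Q x - 1) i j ≤ 0 :=
    fun x hx i j => smul_sub_one_apply_nonpos hc (hoff x hx)
  have hWdec : ∀ i j, HasAntitoneDecrementsOn (fun x => -((b₁ - b₂) • Q x - 1) i j) U :=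
    fun i j t x hx y hy hxy => by
      have := mul_le_mul_of_nonneg_left (hQ i j t hx hy hxy) hc
      simp only [Matrix.sub_apply, Matrix.smul_apply, smul_eq_mul] at this ⊢
      linarith
  have hP := hasAntitoneDecrementsOn_inv_apply hU hpos hoff hQ
  have hR := hasAntitoneDecrementsOn_inv_apply hU hW hWoff hWdec
  have hP0 := fun x hx => (hpos x hx).inv_apply_nonneg (hoff x hx)
  have hR0 := fun x hx => (hW x hx).inv_apply_nonneg (hWoff x hx)
  refine ((hasAntitoneDecrementsOn_trace_mul hU hP hP hP0 hP0).add
    ((hasAntitoneDecrementsOn_trace_mul hU hP hR hP0 hR0).const_mul hb₂)).congr hU fun x hx => ?_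
  exact (coherence4_eq (hpos x hx).isUnit (hW x hx).isUnit).symm

end Coherence

theorem hasAntitoneDecrementsOn_neg_add_diagonal_apply {ι : Type*} [DecidableEq ι]
    {U : Set (Finset ι)} (L : Matrix ι ι ℝ) {κ : ι → ℝ} (hκ : ∀ i, 0 ≤ κ i) (i j : ι) :
    HasAntitoneDecrementsOn (fun S => -(L + diagonal fun k => if k ∈ S then κ k else 0) i j) U := by
  intro T S _ S' _ hSS'
  obtain rfl | hij := eq_or_ne i j
  · simp only [Matrix.add_apply, diagonal_apply_eq, Finset.sup_eq_union, Finset.mem_union]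
    have := hκ i
    have := @hSS' i
    by_cases h : i ∈ S <;> by_cases h' : i ∈ S' <;> by_cases hT : i ∈ T <;> simp_all
  · simp [diagonal_apply_ne _ hij]

theorem Finset.isUpperSet_setOf_nonempty {ι : Type*} : IsUpperSet {S : Finset ι | S.Nonempty} :=
  fun _ _ h hS => hS.mono h

theorem monotone_submodular_of_hasAntitoneDecrementsOn {ι : Type*} [DecidableEq ι]
    {H f : Finset ι → ℝ} {mx : ℝ} (hH : HasAntitoneDecrementsOn H {S | S.Nonempty})
    (hH0 : ∀ S : Finset ι, S.Nonempty → 0 ≤ H S) (hmx : IsGreatest {x | ∃ s, x = H {s}} mx)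
    (hf0 : f ∅ = 0) (hf : ∀ S : Finset ι, S.Nonempty → f S = 2 * mx - H S) :
    (∀ A B, A ⊆ B → f A ≤ f B) ∧ (∀ A B, f (A ∪ B) + f (A ∩ B) ≤ f A + f B) := by
  have hanti := hH.antitoneOn
  have hle : ∀ S : Finset ι, S.Nonempty → H S ≤ mx := fun S ⟨s, hs⟩ =>
    (hanti (Finset.singleton_nonempty s) ⟨s, hs⟩ (Finset.singleton_subset_iff.2 hs)).trans
      (hmx.2 ⟨s, rfl⟩)
  refine ⟨fun A B hAB => ?_, fun A B => ?_⟩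
  · obtain rfl | hA := A.eq_empty_or_nonempty
    · obtain rfl | hB := B.eq_empty_or_nonempty
      · rfl
      obtain ⟨s, rfl⟩ := hmx.1
      rw [hf0, hf B hB]
      linarith [hle B hB, hH0 _ (Finset.singleton_nonempty s)]
    · rw [hf A hA, hf B (hA.mono hAB)]
      linarith [hanti hA (hA.mono hAB) hAB]
  · obtain rfl | hA := A.eq_empty_or_nonempty
    · simp [add_comm]
    obtain rfl | hB := B.eq_empty_or_nonempty
    · simp
    have hAB : (A ∪ B).Nonempty := hA.mono Finset.subset_union_left
    rw [hf A hA, hf B hB, hf _ hAB]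
    obtain hAB' | hAB' := (A ∩ B).eq_empty_or_nonempty
    · rw [hAB', hf0]
      linarith [hle A hA, hle B hB, hH0 _ hAB]
    · rw [hf _ hAB']
      have := hH.add_le_sup_add_inf Finset.isUpperSet_setOf_nonempty hAB'
      simp only [Finset.sup_eq_union, Finset.inf_eq_inter] at this
      linarith

theorem setFunction_f4_monotone_submodular_general (n : ℕ)
    (L : Matrix (Fin n) (Fin n) ℝ)
    (hLoff : ∀ i j, i ≠ j → L i j ≤ 0)
    (κ : Fin n → ℝ) (hκ : ∀ i, 0 < κ i)
    (Q : Finset (Fin n) → Matrix (Fin n) (Fin n) ℝ)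
    (hQdef : ∀ S, Q S = L + Matrix.diagonal fun i => if i ∈ S then κ i else 0)
    (hQpos : ∀ S : Finset (Fin n), S.Nonempty → (Q S).PosDef)
    (a₁ a₂ a₃ a₄ : ℝ) (ha₁ : 0 < a₁)
    (heig : ∀ S : Finset (Fin n), S.Nonempty →
      ∀ lam ∈ (Q S).charpoly.roots,
        1 < ((a₃ * a₄ / a₂) - (a₁ * a₄ ^ 2 / a₂ ^ 2)) * lam)
    (mx : ℝ)
    (hmx : IsGreatest {x : ℝ | ∃ s : Fin n, x =
      Matrix.trace ((Q {s})⁻¹ * (Q {s})⁻¹ *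
        ((a₃ * a₄ / a₂) • Q {s} - (1 : Matrix (Fin n) (Fin n) ℝ)) *
        (((a₃ * a₄ / a₂) - (a₁ * a₄ ^ 2 / a₂ ^ 2)) • Q {s} -
          (1 : Matrix (Fin n) (Fin n) ℝ))⁻¹)} mx)
    (f₄ : Finset (Fin n) → ℝ)
    (hf0 : f₄ ∅ = 0)
    (hf : ∀ S : Finset (Fin n), S.Nonempty →
      f₄ S = 2 * mx - Matrix.trace ((Q S)⁻¹ * (Q S)⁻¹ *
        ((a₃ * a₄ / a₂) • Q S - (1 : Matrix (Fin n) (Fin n) ℝ)) *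
        (((a₃ * a₄ / a₂) - (a₁ * a₄ ^ 2 / a₂ ^ 2)) • Q S -
          (1 : Matrix (Fin n) (Fin n) ℝ))⁻¹)) :
    (∀ A B : Finset (Fin n), A ⊆ B → f₄ A ≤ f₄ B) ∧
    (∀ A B : Finset (Fin n), f₄ (A ∪ B) + f₄ (A ∩ B) ≤ f₄ A + f₄ B) := by
  set b₁ := a₃ * a₄ / a₂
  set b₂ := a₁ * a₄ ^ 2 / a₂ ^ 2
  have hb₂ : 0 ≤ b₂ := by positivity
  obtain ⟨s, -⟩ := hmx.1
  have hc : 0 < b₁ - b₂ := by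
    have hQs := hQpos {s} (Finset.singleton_nonempty s)
    have := heig {s} (Finset.singleton_nonempty s) _ (hQs.1.eigenvalues_mem_roots_charpoly s)
    exact pos_of_mul_pos_left (one_pos.trans this) (hQs.eigenvalues_pos s).le
  have hQoff : ∀ S : Finset (Fin n), S.Nonempty → ∀ i j, i ≠ j → Q S i j ≤ 0 :=
    fun S _ i j hij => by simpa [hQdef, diagonal_apply_ne _ hij] using hLoff i j hij
  have hQdec : ∀ i j, HasAntitoneDecrementsOn (fun S => -Q S i j) {S | S.Nonempty} := by
    simpa only [hQdef] using hasAntitoneDecrementsOn_neg_add_diagonal_apply L fun i => (hκ i).le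
  have hW : ∀ S : Finset (Fin n), S.Nonempty → ((b₁ - b₂) • Q S - 1).PosDef :=
    fun S hS => (hQpos S hS).1.posDef_smul_sub_one (heig S hS)
  exact monotone_submodular_of_hasAntitoneDecrementsOn
    (hasAntitoneDecrementsOn_coherence4 Finset.isUpperSet_setOf_nonempty hb₂ hc.le hQpos hQoff
      hQdec hW)
    (fun S hS => coherence4_nonneg hb₂ hc.le (hQpos S hS) (hQoff S hS) (hW S hS)) hmx hf0 hf

/-- The fourth-order set function `f₄(∅) = 0`,
`f₄(S) = C₄ − tr(Q_S⁻²(b₁Q_S − I)((b₁ − b₂)Q_S − I)⁻¹)` for nonempty `S`,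
where `b₁ = a₃a₄/a₂`, `b₂ = a₁a₄²/a₂²`, and
`C₄ = 2·max_{s ∈ V} tr(Q_{{s}}⁻²(b₁Q_{{s}} − I)((b₁ − b₂)Q_{{s}} − I)⁻¹)`, is
non-decreasing and submodular, where `Q_S = L + D_κ D_S`. -/
theorem setFunction_f4_monotone_submodular (n : ℕ) (hn : 1 ≤ n)
    (L : Matrix (Fin n) (Fin n) ℝ)
    (hLsymm : L.IsSymm)
    (hLoff : ∀ i j, i ≠ j → L i j ≤ 0)
    (hLrow : ∀ i, ∑ j, L i j = 0)
    (hLker : ∀ x : Fin n → ℝ, L.mulVec x = 0 ↔ ∃ c : ℝ, x = fun _ => c)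
    (κ : Fin n → ℝ) (hκ : ∀ i, 0 < κ i)
    (Q : Finset (Fin n) → Matrix (Fin n) (Fin n) ℝ)
    (hQdef : ∀ S, Q S = L + Matrix.diagonal fun i => if i ∈ S then κ i else 0)
    (hQpos : ∀ S : Finset (Fin n), S.Nonempty → (Q S).PosDef)
    (a₁ a₂ a₃ a₄ : ℝ) (ha₁ : 0 < a₁) (ha₂ : 0 < a₂) (ha₃ : 0 < a₃) (ha₄ : 0 < a₄)
    (heig : ∀ S : Finset (Fin n), S.Nonempty →
      ∀ lam ∈ (Q S).charpoly.roots,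
        1 < ((a₃ * a₄ / a₂) - (a₁ * a₄ ^ 2 / a₂ ^ 2)) * lam)
    (mx : ℝ)
    (hmx : IsGreatest {x : ℝ | ∃ s : Fin n, x =
      Matrix.trace ((Q {s})⁻¹ * (Q {s})⁻¹ *
        ((a₃ * a₄ / a₂) • Q {s} - (1 : Matrix (Fin n) (Fin n) ℝ)) *
        (((a₃ * a₄ / a₂) - (a₁ * a₄ ^ 2 / a₂ ^ 2)) • Q {s} -
          (1 : Matrix (Fin n) (Fin n) ℝ))⁻¹)} mx)
    (f₄ : Finset (Fin n) → ℝ)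
    (hf0 : f₄ ∅ = 0)
    (hf : ∀ S : Finset (Fin n), S.Nonempty →
      f₄ S = 2 * mx - Matrix.trace ((Q S)⁻¹ * (Q S)⁻¹ *
        ((a₃ * a₄ / a₂) • Q S - (1 : Matrix (Fin n) (Fin n) ℝ)) *
        (((a₃ * a₄ / a₂) - (a₁ * a₄ ^ 2 / a₂ ^ 2)) • Q S -
          (1 : Matrix (Fin n) (Fin n) ℝ))⁻¹)) :
    (∀ A B : Finset (Fin n), A ⊆ B → f₄ A ≤ f₄ B) ∧
    (∀ A B : Finset (Fin n), f₄ (A ∪ B) + f₄ (A ∩ B) ≤ f₄ A + f₄ B) :=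
  setFunction_f4_monotone_submodular_general n L hLoff κ hκ Q hQdef hQpos a₁ a₂ a₃ a₄ ha₁ heig mx
    hmx f₄ hf0 hf
end

section
/- Let k ≥ 1 with k ≤ |V|. Define f_2(∅) = 0 and, for nonempty S ⊆ V, f_2(S) = C_2 − tr(Q_S⁻²), where C_2 = 2·max over single nodes s ∈ V of tr(Q_{{s}}⁻²). Suppose S^g ⊆ V with |S^g| = k is produced by the greedy algorithm for f_2: there is an ordering v_1, …, v_k of the elements of S^g such that, writing S_j = {v_1, …, v_j} (with S_0 = ∅), for every j ∈ {1, …, k} and every u ∈ V \ S_{j−1} one has f_2(S_{j−1} ∪ {v_j}) ≥ f_2(S_{j−1} ∪ {u}). Let S* be any subset of V with |S*| = k minimizing tr(Q_S⁻²) over all subsets of size k. Then tr(Q_{S^g}⁻²) ≤ C_2 / e + (1 − 1/e)·tr(Q_{S*}⁻²), where e is Euler's number. -/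
/-- Greedy bound for second-order coherence: if `S^g` of size `k` is produced
by the greedy algorithm for `f₂(S) = C₂ − tr(Q_S⁻²)` (with `f₂(∅) = 0` and
`C₂ = 2·max_{s ∈ V} tr(Q_{{s}}⁻²)`), and `S*` of size `k` minimizes
`tr(Q_S⁻²)` over all size-`k` subsets, then
`tr(Q_{S^g}⁻²) ≤ C₂/e + (1 − 1/e)·tr(Q_{S*}⁻²)`. -/
theorem greedy_secondOrder_bound (n : ℕ) (hn : 1 ≤ n)
    (L : Matrix (Fin n) (Fin n) ℝ)
    (hLsymm : L.IsSymm)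
    (hLoff : ∀ i j, i ≠ j → L i j ≤ 0)
    (hLrow : ∀ i, ∑ j, L i j = 0)
    (hLker : ∀ x : Fin n → ℝ, L.mulVec x = 0 ↔ ∃ c : ℝ, x = fun _ => c)
    (κ : Fin n → ℝ) (hκ : ∀ i, 0 < κ i)
    (Q : Finset (Fin n) → Matrix (Fin n) (Fin n) ℝ)
    (hQdef : ∀ S, Q S = L + Matrix.diagonal fun i => if i ∈ S then κ i else 0)
    (hQpos : ∀ S : Finset (Fin n), S.Nonempty → (Q S).PosDef)
    (k : ℕ) (hk1 : 1 ≤ k) (hkn : k ≤ n)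
    (mx : ℝ)
    (hmx : IsGreatest {x : ℝ | ∃ s : Fin n, x =
      Matrix.trace ((Q {s})⁻¹ * (Q {s})⁻¹)} mx)
    (f₂ : Finset (Fin n) → ℝ)
    (hf0 : f₂ ∅ = 0)
    (hf : ∀ S : Finset (Fin n), S.Nonempty →
      f₂ S = 2 * mx - Matrix.trace ((Q S)⁻¹ * (Q S)⁻¹))
    (Sg : Finset (Fin n)) (hSgcard : Sg.card = k)
    (hgreedy : ∃ v : Fin k → Fin n, Function.Injective v ∧
      Sg = Finset.image v Finset.univ ∧
      ∀ j : Fin k, ∀ u : Fin n,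
        u ∉ Finset.image v (Finset.univ.filter fun i => i < j) →
        f₂ (insert u (Finset.image v (Finset.univ.filter fun i => i < j))) ≤
          f₂ (insert (v j) (Finset.image v (Finset.univ.filter fun i => i < j))))
    (Sstar : Finset (Fin n)) (hSstarcard : Sstar.card = k)
    (hSstaropt : ∀ T : Finset (Fin n), T.card = k →
      Matrix.trace ((Q Sstar)⁻¹ * (Q Sstar)⁻¹) ≤
        Matrix.trace ((Q T)⁻¹ * (Q T)⁻¹)) :
    Matrix.trace ((Q Sg)⁻¹ * (Q Sg)⁻¹) ≤
      2 * mx / Real.exp 1 +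
        (1 - 1 / Real.exp 1) * Matrix.trace ((Q Sstar)⁻¹ * (Q Sstar)⁻¹) := by
  classical
  have hdet : ∀ S : Finset (Fin n), S.Nonempty → IsUnit (Q S).det := fun S hS =>
    isUnit_iff_ne_zero.mpr (ne_of_gt (hQpos S hS).det_pos)
  have hrowsum : ∀ (S : Finset (Fin n)) (kk : Fin n), ∑ l, Q S kk l = (if kk ∈ S then κ kk else 0) := by
    intro S kk
    rw [hQdef]
    simp only [Matrix.add_apply, Finset.sum_add_distrib, hLrow kk, Matrix.diagonal_apply, zero_add]
    simp
  have hoffdiag : ∀ (S : Finset (Fin n)) (kk l : Fin n), l ≠ kk → Q S kk l = L kk l := by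
    intro S kk l h
    rw [hQdef, Matrix.add_apply, Matrix.diagonal_apply_ne _ (fun hh => h hh.symm), add_zero]
  have inv_nonneg : ∀ S : Finset (Fin n), S.Nonempty → ∀ i j, 0 ≤ (Q S)⁻¹ i j := by
    intro S hS i j
    obtain ⟨s0, hs0⟩ := hS
    have hMinv : Q S * (Q S)⁻¹ = 1 := Matrix.mul_nonsing_inv _ (hdet S ⟨s0, hs0⟩)
    set x : Fin n → ℝ := fun l => (Q S)⁻¹ l j with hxdef
    have hx : ∀ kk, ∑ l, Q S kk l * x l = (1 : Matrix (Fin n) (Fin n) ℝ) kk j := by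
      intro kk; rw [← Matrix.mul_apply, hMinv]
    by_contra hneg
    push_neg at hneg
    obtain ⟨m, -, hm⟩ := Finset.exists_min_image Finset.univ x ⟨s0, Finset.mem_univ s0⟩
    have hm' : ∀ l, x m ≤ x l := fun l => hm l (Finset.mem_univ l)
    have hc : x m < 0 := lt_of_le_of_lt (hm' i) hneg
    have key : ∀ kk, x kk = x m → kk ∉ S ∧ ∀ l, L kk l ≠ 0 → x l = x m := by
      intro kk hk
      have h1 : ∀ l, Q S kk l * x l ≤ Q S kk l * x m := by
        intro l
        by_cases hlk : l = kk
        · subst hlk; rw [hk]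
        · rw [hoffdiag S kk l hlk]
          exact mul_le_mul_of_nonpos_left (hm' l) (hLoff kk l (fun h => hlk h.symm))
      have h2 : ∑ l, Q S kk l * x m = (if kk ∈ S then κ kk else 0) * x m := by
        rw [← Finset.sum_mul, hrowsum S kk]
      have h3 : (if kk ∈ S then κ kk else 0) * x m ≤ 0 := by
        split_ifs with hkS
        · exact le_of_lt (mul_neg_of_pos_of_neg (hκ kk) hc)
        · simp
      have h4 : (0:ℝ) ≤ (1 : Matrix (Fin n) (Fin n) ℝ) kk j := by
        rw [Matrix.one_apply]; split_ifs <;> norm_num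
      have hsle : ∑ l, Q S kk l * x l ≤ (if kk ∈ S then κ kk else 0) * x m := by
        rw [← h2]; exact Finset.sum_le_sum (fun l _ => h1 l)
      have h5 := hx kk
      have hs0' : ∑ l, Q S kk l * x l = 0 := by linarith
      have hind0 : (if kk ∈ S then κ kk else 0) * x m = 0 := by linarith
      constructor
      · intro hkS
        rw [if_pos hkS] at hind0
        have := mul_neg_of_pos_of_neg (hκ kk) hc
        linarith
      · intro l hLl
        have hterm : ∀ l ∈ Finset.univ, 0 ≤ Q S kk l * x m - Q S kk l * x l :=
          fun l _ => sub_nonneg.mpr (h1 l)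
        have hsum0 : ∑ l, (Q S kk l * x m - Q S kk l * x l) = 0 := by
          rw [Finset.sum_sub_distrib, h2, hs0', hind0, sub_zero]
        have heach := (Finset.sum_eq_zero_iff_of_nonneg hterm).mp hsum0 l (Finset.mem_univ l)
        by_cases hlk : l = kk
        · subst hlk; exact hk
        · rw [hoffdiag S kk l hlk] at heach
          have h6 : L kk l * (x m - x l) = 0 := by linear_combination heach
          have h7 : x m - x l = 0 := (mul_eq_zero.mp h6).resolve_left hLl
          linarith
    set z : Fin n → ℝ := fun l => if x l = x m then 1 else 0 with hzdef
    have hz : L.mulVec z = 0 := by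
      funext kk
      show ∑ l, L kk l * z l = 0
      by_cases hk : x kk = x m
      · calc ∑ l, L kk l * z l = ∑ l, L kk l := by
              refine Finset.sum_congr rfl fun l _ => ?_
              by_cases hl : x l = x m
              · simp [hzdef, hl]
              · have hL0 : L kk l = 0 := by
                  by_contra hh; exact hl ((key kk hk).2 l hh)
                simp [hL0]
          _ = 0 := hLrow kk
      · calc ∑ l, L kk l * z l = ∑ l, (0:ℝ) := by
              refine Finset.sum_congr rfl fun l _ => ?_
              by_cases hl : x l = x m
              · have hlk0 : L l kk = 0 := by
                  by_contra hh; exact hk ((key l hl).2 kk hh)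
                have hkl0 : L kk l = 0 := (hLsymm.apply l kk).trans hlk0
                simp [hkl0]
              · simp [hzdef, hl]
          _ = 0 := Finset.sum_const_zero
    obtain ⟨c', hc'⟩ := (hLker z).mp hz
    have hzm : z m = 1 := by simp [hzdef]
    have hc'1 : c' = 1 := by rw [hc'] at hzm; exact hzm
    have h7 : z s0 = 1 := by rw [hc', hc'1]
    have hxs0 : x s0 = x m := by
      by_contra hh; simp only [hzdef, if_neg hh] at h7; norm_num at h7
    exact (key s0 hxs0).1 hs0
  -- generic entrywise product lemmas
  have entry_mul_nonneg : ∀ (X Y : Matrix (Fin n) (Fin n) ℝ),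
      (∀ i j, 0 ≤ X i j) → (∀ i j, 0 ≤ Y i j) → ∀ i j, 0 ≤ (X * Y) i j := by
    intro X Y hX hY i j
    rw [Matrix.mul_apply]
    exact Finset.sum_nonneg fun l _ => mul_nonneg (hX i l) (hY l j)
  have entry_mul_mono : ∀ (X X' Y Y' : Matrix (Fin n) (Fin n) ℝ),
      (∀ i j, 0 ≤ X' i j) → (∀ i j, X' i j ≤ X i j) →
      (∀ i j, 0 ≤ Y' i j) → (∀ i j, Y' i j ≤ Y i j) →
      ∀ i j, (X' * Y') i j ≤ (X * Y) i j := by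
    intro X X' Y Y' hX0 hXle hY0 hYle i j
    rw [Matrix.mul_apply, Matrix.mul_apply]
    exact Finset.sum_le_sum fun l _ =>
      mul_le_mul (hXle i l) (hYle l j) (hY0 l j) (le_trans (hX0 i l) (hXle i l))
  have hsub_eq : ∀ S T : Finset (Fin n), S.Nonempty → S ⊆ T →
      (Q S)⁻¹ - (Q T)⁻¹ = (Q S)⁻¹ * (Q T - Q S) * (Q T)⁻¹ := by
    intro S T hS hST
    have hT : T.Nonempty := ⟨hS.choose, hST hS.choose_spec⟩
    have h1 : (Q S)⁻¹ * Q S = 1 := Matrix.nonsing_inv_mul _ (hdet S hS)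
    have h2 : Q T * (Q T)⁻¹ = 1 := Matrix.mul_nonsing_inv _ (hdet T hT)
    calc (Q S)⁻¹ - (Q T)⁻¹
        = (Q S)⁻¹ * (Q T * (Q T)⁻¹) - ((Q S)⁻¹ * Q S) * (Q T)⁻¹ := by
          rw [h1, h2, Matrix.mul_one, Matrix.one_mul]
      _ = (Q S)⁻¹ * (Q T - Q S) * (Q T)⁻¹ := by noncomm_ring
  have hdiagdiff : ∀ S T : Finset (Fin n),
      Q T - Q S = Matrix.diagonal (fun w => (if w ∈ T then κ w else 0) - (if w ∈ S then κ w else 0)) := by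
    intro S T
    rw [hQdef, hQdef]
    ext i j
    by_cases h : i = j
    · subst h; simp [Matrix.sub_apply, Matrix.add_apply, Matrix.diagonal_apply_eq]
    · simp [Matrix.sub_apply, Matrix.add_apply, Matrix.diagonal_apply_ne _ h]
  have hediff_nonneg : ∀ S T : Finset (Fin n), S ⊆ T →
      ∀ w, 0 ≤ (if w ∈ T then κ w else 0) - (if w ∈ S then κ w else 0) := by
    intro S T hST w
    by_cases h1 : w ∈ S
    · simp [h1, hST h1]
    · by_cases h2 : w ∈ T <;> simp [h1, h2, le_of_lt (hκ w)]
  have inv_mono : ∀ S T : Finset (Fin n), S.Nonempty → S ⊆ T →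
      ∀ i j, (Q T)⁻¹ i j ≤ (Q S)⁻¹ i j := by
    intro S T hS hST i j
    have hT : T.Nonempty := ⟨hS.choose, hST hS.choose_spec⟩
    have h := hsub_eq S T hS hST
    rw [hdiagdiff S T] at h
    have h0 : 0 ≤ ((Q S)⁻¹ - (Q T)⁻¹) i j := by
      rw [h, Matrix.mul_apply]
      refine Finset.sum_nonneg fun l _ => ?_
      rw [Matrix.mul_diagonal]
      exact mul_nonneg (mul_nonneg (inv_nonneg S hS i l) (hediff_nonneg S T hST l))
        (inv_nonneg T hT l j)
    rw [Matrix.sub_apply] at h0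
    linarith
  have htrdiag : ∀ (X : Matrix (Fin n) (Fin n) ℝ) (e : Fin n → ℝ),
      Matrix.trace (X * Matrix.diagonal e) = ∑ w, X w w * e w := by
    intro X e
    simp [Matrix.trace, Matrix.diag, Matrix.mul_diagonal]
  have trace_sub_eq : ∀ S T : Finset (Fin n), S.Nonempty → S ⊆ T →
      Matrix.trace ((Q S)⁻¹ * (Q S)⁻¹) - Matrix.trace ((Q T)⁻¹ * (Q T)⁻¹)
        = ∑ w, (((Q T)⁻¹ * ((Q S)⁻¹ * (Q S)⁻¹)) w w + ((Q T)⁻¹ * (Q T)⁻¹ * (Q S)⁻¹) w w)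
            * ((if w ∈ T then κ w else 0) - (if w ∈ S then κ w else 0)) := by
    intro S T hS hST
    set A := (Q S)⁻¹ with hA
    set B := (Q T)⁻¹ with hB
    set e : Fin n → ℝ := fun w => (if w ∈ T then κ w else 0) - (if w ∈ S then κ w else 0) with hedef
    have hAB : A - B = A * Matrix.diagonal e * B := by
      rw [hsub_eq S T hS hST, hdiagdiff S T]
    have hsq : A * A - B * B = (A * A * Matrix.diagonal e) * B + (A * Matrix.diagonal e) * (B * B) := by
      have expand : A * A - B * B = A * (A - B) + (A - B) * B := by noncomm_ring
      rw [expand, hAB]; noncomm_ring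
    have t1 : Matrix.trace ((A * A * Matrix.diagonal e) * B) = ∑ w, (B * (A * A)) w w * e w := by
      rw [Matrix.trace_mul_comm]
      have h9 : B * (A * A * Matrix.diagonal e) = (B * (A * A)) * Matrix.diagonal e := by noncomm_ring
      rw [h9, htrdiag]
    have t2 : Matrix.trace ((A * Matrix.diagonal e) * (B * B)) = ∑ w, (B * B * A) w w * e w := by
      rw [Matrix.trace_mul_comm]
      have h9 : (B * B) * (A * Matrix.diagonal e) = (B * B * A) * Matrix.diagonal e := by noncomm_ring
      rw [h9, htrdiag]
    calc Matrix.trace (A * A) - Matrix.trace (B * B)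
        = Matrix.trace (A * A - B * B) := (Matrix.trace_sub _ _).symm
      _ = Matrix.trace ((A * A * Matrix.diagonal e) * B) + Matrix.trace ((A * Matrix.diagonal e) * (B * B)) := by
          rw [hsq, Matrix.trace_add]
      _ = ∑ w, ((B * (A * A)) w w + (B * B * A) w w) * e w := by
          rw [t1, t2, ← Finset.sum_add_distrib]
          exact Finset.sum_congr rfl fun w _ => by ring
  have trace_nonneg : ∀ S : Finset (Fin n), S.Nonempty → 0 ≤ Matrix.trace ((Q S)⁻¹ * (Q S)⁻¹) := by
    intro S hS
    exact Finset.sum_nonneg fun w _ => entry_mul_nonneg _ _ (inv_nonneg S hS) (inv_nonneg S hS) w w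
  have trace_mono : ∀ S T : Finset (Fin n), S.Nonempty → S ⊆ T →
      Matrix.trace ((Q T)⁻¹ * (Q T)⁻¹) ≤ Matrix.trace ((Q S)⁻¹ * (Q S)⁻¹) := by
    intro S T hS hST
    have hT : T.Nonempty := ⟨hS.choose, hST hS.choose_spec⟩
    have h := trace_sub_eq S T hS hST
    have h0 : 0 ≤ ∑ w, (((Q T)⁻¹ * ((Q S)⁻¹ * (Q S)⁻¹)) w w + ((Q T)⁻¹ * (Q T)⁻¹ * (Q S)⁻¹) w w)
        * ((if w ∈ T then κ w else 0) - (if w ∈ S then κ w else 0)) := by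
      refine Finset.sum_nonneg fun w _ => mul_nonneg (add_nonneg ?_ ?_) (hediff_nonneg S T hST w)
      · exact entry_mul_nonneg _ _ (inv_nonneg T hT)
          (entry_mul_nonneg _ _ (inv_nonneg S hS) (inv_nonneg S hS)) w w
      · exact entry_mul_nonneg _ _ (entry_mul_nonneg _ _ (inv_nonneg T hT) (inv_nonneg T hT))
          (inv_nonneg S hS) w w
    linarith
  have submod : ∀ (S T : Finset (Fin n)) (u : Fin n), S.Nonempty → S ⊆ T → u ∉ T →
      Matrix.trace ((Q T)⁻¹ * (Q T)⁻¹) - Matrix.trace ((Q (insert u T))⁻¹ * (Q (insert u T))⁻¹)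
        ≤ Matrix.trace ((Q S)⁻¹ * (Q S)⁻¹) - Matrix.trace ((Q (insert u S))⁻¹ * (Q (insert u S))⁻¹) := by
    intro S T u hS hST huT
    have hT : T.Nonempty := ⟨hS.choose, hST hS.choose_spec⟩
    have huS : u ∉ S := fun h => huT (hST h)
    rw [trace_sub_eq S (insert u S) hS (Finset.subset_insert u S),
        trace_sub_eq T (insert u T) hT (Finset.subset_insert u T)]
    have hcoefS : ∀ w, (if w ∈ insert u S then κ w else 0) - (if w ∈ S then κ w else 0)
        = (if w = u then κ u else 0) := by
      intro w
      by_cases hw : w = u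
      · subst hw; simp [huS]
      · simp [Finset.mem_insert, hw]
    have hcoefT : ∀ w, (if w ∈ insert u T then κ w else 0) - (if w ∈ T then κ w else 0)
        = (if w = u then κ u else 0) := by
      intro w
      by_cases hw : w = u
      · subst hw; simp [huT]
      · simp [Finset.mem_insert, hw]
    refine Finset.sum_le_sum fun w _ => ?_
    rw [hcoefS w, hcoefT w]
    have hcoef0 : 0 ≤ (if w = u then κ u else 0) := by
      split_ifs; exacts [le_of_lt (hκ u), le_rfl]
    refine mul_le_mul_of_nonneg_right ?_ hcoef0
    have m1 := inv_mono S T hS hST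
    have m2 := inv_mono (insert u S) (insert u T) (Finset.insert_nonempty u S)
      (Finset.insert_subset_insert u hST)
    have n1 := inv_nonneg S hS
    have n2 := inv_nonneg T hT
    have n3 := inv_nonneg (insert u S) (Finset.insert_nonempty u S)
    have n4 := inv_nonneg (insert u T) (Finset.insert_nonempty u T)
    refine add_le_add ?_ ?_
    · exact entry_mul_mono _ _ _ _ n4 m2 (entry_mul_nonneg _ _ n2 n2)
        (fun i j => entry_mul_mono _ _ _ _ n2 m1 n2 m1 i j) w w
    · exact entry_mul_mono _ _ _ _ (entry_mul_nonneg _ _ n4 n4)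
        (fun i j => entry_mul_mono _ _ _ _ n4 m2 n4 m2 i j) n2 m1 w w
  have hmx_ub : ∀ s : Fin n, Matrix.trace ((Q {s})⁻¹ * (Q {s})⁻¹) ≤ mx := fun s => hmx.2 ⟨s, rfl⟩
  have hmono : ∀ B T : Finset (Fin n), B ⊆ T → f₂ B ≤ f₂ T := by
    intro B T hBT
    rcases B.eq_empty_or_nonempty with rfl | hB
    · rw [hf0]
      rcases T.eq_empty_or_nonempty with rfl | hT
      · rw [hf0]
      · obtain ⟨t, ht⟩ := hT
        rw [hf T ⟨t, ht⟩]
        have h1 := trace_mono {t} T ⟨t, Finset.mem_singleton_self t⟩ (Finset.singleton_subset_iff.mpr ht)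
        have h2 := hmx_ub t
        have h3 := trace_nonneg {t} ⟨t, Finset.mem_singleton_self t⟩
        linarith
    · have hT : T.Nonempty := ⟨hB.choose, hBT hB.choose_spec⟩
      rw [hf B hB, hf T hT]
      have := trace_mono B T hB hBT
      linarith
  have hsub : ∀ (B T : Finset (Fin n)) (u : Fin n), B ⊆ T →
      f₂ (insert u T) - f₂ T ≤ f₂ (insert u B) - f₂ B := by
    intro B T u hBT
    by_cases huT : u ∈ T
    · rw [Finset.insert_eq_self.mpr huT]
      have := hmono B (insert u B) (Finset.subset_insert u B)
      linarith
    · rcases B.eq_empty_or_nonempty with rfl | hB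
      · rcases T.eq_empty_or_nonempty with rfl | hT
        · exact le_rfl
        · obtain ⟨t, ht⟩ := hT
          have hTu : (insert u T).Nonempty := Finset.insert_nonempty u T
          have hins : (insert u (∅ : Finset (Fin n))) = {u} := rfl
          rw [hf0, hins, hf {u} ⟨u, Finset.mem_singleton_self u⟩,
            hf (insert u T) hTu, hf T ⟨t, ht⟩]
          have h1 := trace_mono {t} T ⟨t, Finset.mem_singleton_self t⟩ (Finset.singleton_subset_iff.mpr ht)
          have h2 := hmx_ub t
          have h3 := hmx_ub u
          have h4 := trace_nonneg (insert u T) hTu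
          linarith
      · have hT : T.Nonempty := ⟨hB.choose, hBT hB.choose_spec⟩
        have h := submod B T u hB hBT huT
        rw [hf B hB, hf T hT, hf (insert u B) (Finset.insert_nonempty u B),
          hf (insert u T) (Finset.insert_nonempty u T)]
        linarith
  have htel : ∀ (W B : Finset (Fin n)), f₂ (B ∪ W) ≤ f₂ B + ∑ u ∈ W, (f₂ (insert u B) - f₂ B) := by
    intro W
    induction W using Finset.induction_on with
    | empty => intro B; simp
    | @insert a W' ha ih =>
      intro B
      have h1 : B ∪ insert a W' = insert a (B ∪ W') := by
        ext y; simp [Finset.mem_union, Finset.mem_insert, or_left_comm]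
      have h2 := hsub B (B ∪ W') a Finset.subset_union_left
      have h3 := ih B
      rw [h1, Finset.sum_insert ha]
      linarith
  obtain ⟨v, hvinj, hSgim, hgr⟩ := hgreedy
  set Tj : ℕ → Finset (Fin n) := fun j => (Finset.univ.filter fun i : Fin k => (i : ℕ) < j).image v with hTjdef
  have hT0 : Tj 0 = ∅ := by simp [hTjdef]
  have hTk : Tj k = Sg := by
    have hft : (Finset.univ.filter fun i : Fin k => (i : ℕ) < k) = Finset.univ :=
      Finset.filter_true_of_mem fun i _ => i.isLt
    rw [hSgim]
    show (Finset.univ.filter fun i : Fin k => (i : ℕ) < k).image v = Finset.image v Finset.univ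
    rw [hft]
  have hset : ∀ j : Fin k, (Finset.univ.filter fun i : Fin k => i < j).image v = Tj (j : ℕ) := by
    intro j
    rw [hTjdef]
    congr 1
  have hfilter : ∀ (j : ℕ) (hj : j < k), (Finset.univ.filter fun i : Fin k => (i : ℕ) < j + 1)
      = insert (⟨j, hj⟩ : Fin k) (Finset.univ.filter fun i : Fin k => (i : ℕ) < j) := by
    intro j hj
    ext i
    simp only [Finset.mem_insert, Finset.mem_filter, Finset.mem_univ, true_and,
      Nat.lt_succ_iff_lt_or_eq]
    constructor
    · rintro (h | h)
      · exact Or.inr h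
      · exact Or.inl (Fin.ext h)
    · rintro (h | h)
      · exact Or.inr (by rw [h])
      · exact Or.inl h
  have hstep : ∀ (j : ℕ) (hj : j < k), Tj (j+1) = insert (v ⟨j, hj⟩) (Tj j) := by
    intro j hj
    show (Finset.univ.filter fun i : Fin k => (i : ℕ) < j + 1).image v
      = insert (v ⟨j, hj⟩) ((Finset.univ.filter fun i : Fin k => (i : ℕ) < j).image v)
    rw [hfilter j hj, Finset.image_insert]
  have hkR : (0:ℝ) < (k:ℝ) := by exact_mod_cast hk1
  have hfac : (0:ℝ) ≤ 1 - 1/(k:ℝ) := by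
    rw [sub_nonneg]
    rw [div_le_one hkR]
    exact_mod_cast hk1
  have hMstep : ∀ (j : ℕ) (hj : j < k),
      f₂ Sstar - f₂ (Tj j) ≤ (k:ℝ) * (f₂ (Tj (j+1)) - f₂ (Tj j)) := by
    intro j hj
    set B := Tj j with hBdef
    set W := Sstar \ B with hWdef
    have h1 : f₂ Sstar ≤ f₂ (B ∪ W) := by
      apply hmono
      rw [hWdef, Finset.union_sdiff_self_eq_union]
      exact Finset.subset_union_right
    have h2 := htel W B
    have hMnonneg : 0 ≤ f₂ (Tj (j+1)) - f₂ B := by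
      have := hmono B (Tj (j+1)) (by rw [hstep j hj]; exact Finset.subset_insert _ _)
      linarith
    have h3 : ∀ u ∈ W, f₂ (insert u B) - f₂ B ≤ f₂ (Tj (j+1)) - f₂ B := by
      intro u hu
      have hunotB : u ∉ B := (Finset.mem_sdiff.mp hu).2
      have hg := hgr ⟨j, hj⟩ u (by rw [hset ⟨j, hj⟩]; exact hunotB)
      rw [hset ⟨j, hj⟩] at hg
      have hT1 : f₂ (Tj (j+1)) = f₂ (insert (v ⟨j, hj⟩) B) := by rw [hstep j hj]
      rw [hT1]
      linarith
    have h4 : ∑ u ∈ W, (f₂ (insert u B) - f₂ B) ≤ (W.card : ℝ) * (f₂ (Tj (j+1)) - f₂ B) := by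
      calc ∑ u ∈ W, (f₂ (insert u B) - f₂ B) ≤ ∑ _u ∈ W, (f₂ (Tj (j+1)) - f₂ B) :=
            Finset.sum_le_sum h3
        _ = (W.card : ℝ) * (f₂ (Tj (j+1)) - f₂ B) := by rw [Finset.sum_const, nsmul_eq_mul]
    have h5 : (W.card : ℝ) ≤ (k : ℝ) := by
      have : W.card ≤ Sstar.card := Finset.card_le_card (Finset.sdiff_subset)
      rw [hSstarcard] at this
      exact_mod_cast this
    have h6 : (W.card : ℝ) * (f₂ (Tj (j+1)) - f₂ B) ≤ (k:ℝ) * (f₂ (Tj (j+1)) - f₂ B) :=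
      mul_le_mul_of_nonneg_right h5 hMnonneg
    linarith
  have hrec : ∀ j : ℕ, j ≤ k → f₂ Sstar - f₂ (Tj j) ≤ (1 - 1/(k:ℝ))^j * f₂ Sstar := by
    intro j
    induction j with
    | zero => intro _; rw [hT0, hf0]; simp
    | succ j ih =>
      intro hjk
      have hj : j < k := Nat.lt_of_succ_le hjk
      have ihj := ih (le_of_lt hj)
      have hM := hMstep j hj
      have step : f₂ Sstar - f₂ (Tj (j+1)) ≤ (1 - 1/(k:ℝ)) * (f₂ Sstar - f₂ (Tj j)) := by
        have hexp : (1 - 1/(k:ℝ)) * (f₂ Sstar - f₂ (Tj j))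
            = (f₂ Sstar - f₂ (Tj j)) - (f₂ Sstar - f₂ (Tj j)) / k := by
          field_simp
        rw [hexp]
        have hdiv : (f₂ Sstar - f₂ (Tj j)) / k ≤ f₂ (Tj (j+1)) - f₂ (Tj j) := by
          rw [div_le_iff₀ hkR]
          linarith [hM]
        linarith
      calc f₂ Sstar - f₂ (Tj (j+1)) ≤ (1 - 1/(k:ℝ)) * (f₂ Sstar - f₂ (Tj j)) := step
        _ ≤ (1 - 1/(k:ℝ)) * ((1 - 1/(k:ℝ))^j * f₂ Sstar) := mul_le_mul_of_nonneg_left ihj hfac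
        _ = (1 - 1/(k:ℝ))^(j+1) * f₂ Sstar := by ring
  have hfstar0 : 0 ≤ f₂ Sstar := by
    have := hmono ∅ Sstar (Finset.empty_subset _)
    rw [hf0] at this
    exact this
  have hpow : (1 - 1/(k:ℝ))^k ≤ 1/Real.exp 1 := by
    have h1 : 1 - 1/(k:ℝ) ≤ Real.exp (-(1/(k:ℝ))) := by
      have := Real.add_one_le_exp (-(1/(k:ℝ)))
      linarith
    calc (1 - 1/(k:ℝ))^k ≤ (Real.exp (-(1/(k:ℝ))))^k := pow_le_pow_left₀ hfac h1 k
      _ = Real.exp ((k:ℝ) * (-(1/(k:ℝ)))) := by rw [Real.exp_nat_mul]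
      _ = Real.exp (-1) := by
          congr 1
          field_simp
      _ = 1/Real.exp 1 := by rw [Real.exp_neg]; rw [one_div]
  have hend := hrec k le_rfl
  rw [hTk] at hend
  have h2 : (1 - 1/(k:ℝ))^k * f₂ Sstar ≤ (1/Real.exp 1) * f₂ Sstar :=
    mul_le_mul_of_nonneg_right hpow hfstar0
  have hSgne : Sg.Nonempty := Finset.card_pos.mp (by rw [hSgcard]; exact hk1)
  have hSsne : Sstar.Nonempty := Finset.card_pos.mp (by rw [hSstarcard]; exact hk1)
  rw [hf Sg hSgne] at hend
  rw [hf Sstar hSsne] at hend h2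
  have hE : (0:ℝ) < Real.exp 1 := Real.exp_pos 1
  set tg := Matrix.trace ((Q Sg)⁻¹ * (Q Sg)⁻¹) with htg
  set ts := Matrix.trace ((Q Sstar)⁻¹ * (Q Sstar)⁻¹) with hts
  have e1 : (1/Real.exp 1) * (2 * mx - ts) = 2 * mx / Real.exp 1 - ts / Real.exp 1 := by ring
  have e2 : 2 * mx / Real.exp 1 + (1 - 1/Real.exp 1) * ts = 2 * mx / Real.exp 1 + ts - ts / Real.exp 1 := by ring
  rw [e2]
  linarith
end
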